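/- Adjoint-state representation of the parameter gradient of an optimal-control objective: Let T > 0 and let n, p be natural numbers. Let f : ℝⁿ × ℝᵖ → ℝⁿ and L : ℝⁿ × ℝᵖ → ℝ be continuously differentiable, and let M : ℝⁿ → ℝ be differentiable. Fix a parameter θ₀ ∈ ℝᵖ. Suppose x : [0,T] → ℝⁿ is continuously differentiable with x'(t) = f(x(t), θ₀) for all t ∈ [0,T]; suppose y : [0,T] → L(ℝᵖ, ℝⁿ) (continuous linear maps) is continuously differentiable with y(0) = 0 and y'(t) = D_x f(x(t), θ₀) ∘ y(t) + D_θ f(x(t), θ₀) for all t ∈ [0,T] (the variational equation, i.e. y(t) represents ∂x(t)/∂θ); and suppose the adjoint α : [0,T] → ℝⁿ is continuously differentiable with terminal condition α(T) = ∇M(x(T)) and α'(t) = −(D_x f(x(t), θ₀))ᵀ α(t) − ∇_x L(x(t), θ₀) for all t ∈ [0,T]. Then, as linear functionals on ℝᵖ, DM(x(T)) ∘ y(T) + ∫₀ᵀ D_x L(x(t), θ₀) ∘ y(t) dt = ∫₀ᵀ ⟨α(t), D_θ f(x(t), θ₀)(·)⟩ dt; equivalently, the θ-derivative of the total cost J(θ)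 = M(x(T,θ)) + ∫₀ᵀ L(x(t,θ), θ) dt at θ₀ equals ∫₀ᵀ [ α(t)ᵀ D_θ f(x(t), θ₀) + D_θ L(x(t), θ₀) ] dt. -/

import Mathlib

/-- **Adjoint-state representation of the parameter gradient of an optimal-control
objective.** Let `T > 0`, let `f : ℝⁿ × ℝᵖ → ℝⁿ` and `L : ℝⁿ × ℝᵖ → ℝ` be continuously
differentiable, and let `M : ℝⁿ → ℝ` be differentiable. Fix `θ₀ ∈ ℝᵖ`. Suppose
`x : [0,T] → ℝⁿ` solves `x' t = f (x t) θ₀`; suppose `y : [0,T] → L(ℝᵖ, ℝⁿ)` solves the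
variational equation `y' t = D_x f (x t, θ₀) ∘ y t + D_θ f (x t, θ₀)` with `y 0 = 0`
(so `y t` represents `∂x(t)/∂θ`); and suppose the adjoint `α : [0,T] → ℝⁿ` solves the
backward equation `α' t = -(D_x f (x t, θ₀))ᵀ (α t) - ∇_x L (x t, θ₀)` with terminal
condition `α T = ∇M (x T)`. Then, as continuous linear functionals on `ℝᵖ`,
`DM (x T) ∘ y T + ∫₀ᵀ D_x L (x t, θ₀) ∘ y t dt = ∫₀ᵀ ⟨α t, D_θ f (x t, θ₀) ·⟩ dt`,
i.e. the θ-derivative of the total cost equals the adjoint expression. -/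
theorem adjoint_state_gradient_representation
    (n p : ℕ) (T : ℝ) (hT : 0 < T)
    (f : EuclideanSpace ℝ (Fin n) → EuclideanSpace ℝ (Fin p) → EuclideanSpace ℝ (Fin n))
    (L : EuclideanSpace ℝ (Fin n) → EuclideanSpace ℝ (Fin p) → ℝ)
    (M : EuclideanSpace ℝ (Fin n) → ℝ)
    (hf : ContDiff ℝ 1 (Function.uncurry f))
    (hL : ContDiff ℝ 1 (Function.uncurry L))
    (hM : Differentiable ℝ M)
    (θ₀ : EuclideanSpace ℝ (Fin p))
    (x : ℝ → EuclideanSpace ℝ (Fin n))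
    (hx : ∀ t ∈ Set.Icc (0 : ℝ) T, HasDerivAt x (f (x t) θ₀) t)
    (y : ℝ → (EuclideanSpace ℝ (Fin p) →L[ℝ] EuclideanSpace ℝ (Fin n)))
    (hy0 : y 0 = 0)
    (hy : ∀ t ∈ Set.Icc (0 : ℝ) T, HasDerivAt y
      ((fderiv ℝ (fun z => f z θ₀) (x t)).comp (y t) + fderiv ℝ (f (x t)) θ₀) t)
    (α : ℝ → EuclideanSpace ℝ (Fin n))
    (hαT : α T = gradient M (x T))
    (hα : ∀ t ∈ Set.Icc (0 : ℝ) T, HasDerivAt α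
      (-(ContinuousLinearMap.adjoint (fderiv ℝ (fun z => f z θ₀) (x t))) (α t)
        - gradient (fun z => L z θ₀) (x t)) t) :
    (fderiv ℝ M (x T)).comp (y T)
        + ∫ t in (0 : ℝ)..T, (fderiv ℝ (fun z => L z θ₀) (x t)).comp (y t)
      = ∫ t in (0 : ℝ)..T, (innerSL ℝ (α t)).comp (fderiv ℝ (f (x t)) θ₀) := by
  classical
  set A : ℝ → (EuclideanSpace ℝ (Fin n) →L[ℝ] EuclideanSpace ℝ (Fin n)) :=
    fun t => fderiv ℝ (fun z => f z θ₀) (x t) with hA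
  set B : ℝ → (EuclideanSpace ℝ (Fin p) →L[ℝ] EuclideanSpace ℝ (Fin n)) :=
    fun t => fderiv ℝ (f (x t)) θ₀ with hB
  set DL : ℝ → (EuclideanSpace ℝ (Fin n) →L[ℝ] ℝ) :=
    fun t => fderiv ℝ (fun z => L z θ₀) (x t) with hDL
  have hfd : Differentiable ℝ (Function.uncurry f) := hf.differentiable one_ne_zero
  have hLd : Differentiable ℝ (Function.uncurry L) := hL.differentiable one_ne_zero
  have hAeq : ∀ z : EuclideanSpace ℝ (Fin n), fderiv ℝ (fun w => f w θ₀) z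
      = (fderiv ℝ (Function.uncurry f) (z, θ₀)).comp
          (ContinuousLinearMap.inl ℝ (EuclideanSpace ℝ (Fin n)) (EuclideanSpace ℝ (Fin p))) := by
    intro z
    exact ((hfd (z, θ₀)).hasFDerivAt.comp z (hasFDerivAt_prodMk_left (𝕜 := ℝ) z θ₀)).fderiv
  have hBeq : ∀ z : EuclideanSpace ℝ (Fin n), fderiv ℝ (f z) θ₀
      = (fderiv ℝ (Function.uncurry f) (z, θ₀)).comp
          (ContinuousLinearMap.inr ℝ (EuclideanSpace ℝ (Fin n)) (EuclideanSpace ℝ (Fin p))) := by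
    intro z
    exact ((hfd (z, θ₀)).hasFDerivAt.comp θ₀ (hasFDerivAt_prodMk_right z θ₀)).fderiv
  have hDLeq : ∀ z : EuclideanSpace ℝ (Fin n), fderiv ℝ (fun w => L w θ₀) z
      = (fderiv ℝ (Function.uncurry L) (z, θ₀)).comp
          (ContinuousLinearMap.inl ℝ (EuclideanSpace ℝ (Fin n)) (EuclideanSpace ℝ (Fin p))) := by
    intro z
    exact ((hLd (z, θ₀)).hasFDerivAt.comp z (hasFDerivAt_prodMk_left (𝕜 := ℝ) z θ₀)).fderiv
  have hxC : ContinuousOn x (Set.Icc 0 T) := fun t ht =>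
    ((hx t ht).continuousAt).continuousWithinAt
  have hyC : ContinuousOn y (Set.Icc 0 T) := fun t ht =>
    ((hy t ht).continuousAt).continuousWithinAt
  have hαC : ContinuousOn α (Set.Icc 0 T) := fun t ht =>
    ((hα t ht).continuousAt).continuousWithinAt
  have hDfC : Continuous (fderiv ℝ (Function.uncurry f)) := hf.continuous_fderiv one_ne_zero
  have hDLC : Continuous (fderiv ℝ (Function.uncurry L)) := hL.continuous_fderiv one_ne_zero
  have hpairC : ContinuousOn (fun t => (x t, θ₀)) (Set.Icc 0 T) :=
    hxC.prodMk continuousOn_const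
  have hBC : ContinuousOn B (Set.Icc 0 T) := by
    have : ContinuousOn (fun t =>
        (fderiv ℝ (Function.uncurry f) (x t, θ₀)).comp
          (ContinuousLinearMap.inr ℝ (EuclideanSpace ℝ (Fin n)) (EuclideanSpace ℝ (Fin p))))
        (Set.Icc 0 T) := (hDfC.comp_continuousOn hpairC).clm_comp continuousOn_const
    refine this.congr fun t _ => ?_
    simp only [hB, hBeq]
  have hDLCon : ContinuousOn DL (Set.Icc 0 T) := by
    have : ContinuousOn (fun t =>
        (fderiv ℝ (Function.uncurry L) (x t, θ₀)).comp
          (ContinuousLinearMap.inl ℝ (EuclideanSpace ℝ (Fin n)) (EuclideanSpace ℝ (Fin p))))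
        (Set.Icc 0 T) := (hDLC.comp_continuousOn hpairC).clm_comp continuousOn_const
    refine this.congr fun t _ => ?_
    simp only [hDL, hDLeq]
  set φ : ℝ → (EuclideanSpace ℝ (Fin p) →L[ℝ] ℝ) :=
    fun t => (innerSL ℝ (α t)).comp (y t) with hφ
  set G : ℝ → (EuclideanSpace ℝ (Fin p) →L[ℝ] ℝ) := fun t =>
    (-(DL t).comp (y t)) + (innerSL ℝ (α t)).comp (B t) with hG
  have key : ∀ t ∈ Set.uIcc (0 : ℝ) T, HasDerivAt φ (G t) t := by
    intro t ht
    rw [Set.uIcc_of_le hT.le] at ht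
    have hαt := hα t ht
    have hyt := hy t ht
    have h1 : HasDerivAt (fun s => (innerSL ℝ (α s) : EuclideanSpace ℝ (Fin n) →L[ℝ] ℝ))
        (innerSL ℝ (-(ContinuousLinearMap.adjoint (A t)) (α t)
          - gradient (fun z => L z θ₀) (x t))) t :=
      (innerSL ℝ : EuclideanSpace ℝ (Fin n) →L[ℝ]
        EuclideanSpace ℝ (Fin n) →L[ℝ] ℝ).hasFDerivAt.comp_hasDerivAt t hαt
    have h3 := h1.clm_comp hyt
    have hGeq : (innerSL ℝ (-(ContinuousLinearMap.adjoint (A t)) (α t)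
          - gradient (fun z => L z θ₀) (x t))).comp (y t)
        + (innerSL ℝ (α t)).comp ((A t).comp (y t) + B t) = G t := by
      ext v
      simp only [hG, ContinuousLinearMap.add_apply, ContinuousLinearMap.coe_comp',
        Function.comp_apply, ContinuousLinearMap.neg_apply, innerSL_apply_apply,
        ContinuousLinearMap.comp_add, ContinuousLinearMap.add_comp]
      have hadj : (inner ℝ (ContinuousLinearMap.adjoint (A t) (α t)) (y t v) : ℝ)
          = inner ℝ (α t) ((A t) (y t v)) :=
        ContinuousLinearMap.adjoint_inner_left (A t) (y t v) (α t)
      have hgradL : (inner ℝ (gradient (fun z => L z θ₀) (x t)) (y t v) : ℝ)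
          = (DL t) (y t v) := InnerProductSpace.toDual_symm_apply
      rw [inner_sub_left, inner_neg_left, hadj, hgradL]
      ring
    exact hGeq ▸ h3
  have hIcc : Set.uIcc (0 : ℝ) T = Set.Icc 0 T := Set.uIcc_of_le hT.le
  have hint1 : IntervalIntegrable (fun t => (DL t).comp (y t)) MeasureTheory.volume 0 T := by
    apply ContinuousOn.intervalIntegrable
    rw [hIcc]; exact hDLCon.clm_comp hyC
  have hint2 : IntervalIntegrable (fun t => (innerSL ℝ (α t)).comp (B t))
      MeasureTheory.volume 0 T := by
    apply ContinuousOn.intervalIntegrable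
    rw [hIcc]
    exact (((innerSL ℝ : EuclideanSpace ℝ (Fin n) →L[ℝ]
      EuclideanSpace ℝ (Fin n) →L[ℝ] ℝ).continuous.comp_continuousOn hαC)).clm_comp hBC
  have hintG : IntervalIntegrable G MeasureTheory.volume 0 T := by
    simpa [hG] using hint1.neg.add hint2
  have hFTC : ∫ t in (0:ℝ)..T, G t = φ T - φ 0 :=
    intervalIntegral.integral_eq_sub_of_hasDerivAt key hintG
  have hφ0 : φ 0 = 0 := by
    simp [hφ, hy0]
  have hφT : φ T = (fderiv ℝ M (x T)).comp (y T) := by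
    ext v
    simp only [hφ, ContinuousLinearMap.coe_comp', Function.comp_apply, innerSL_apply_apply, hαT]
    exact InnerProductSpace.toDual_symm_apply
  have hsplit : ∫ t in (0:ℝ)..T, G t
      = -(∫ t in (0:ℝ)..T, (DL t).comp (y t))
        + ∫ t in (0:ℝ)..T, (innerSL ℝ (α t)).comp (B t) := by
    have hint1' : IntervalIntegrable (fun t => -((DL t).comp (y t)))
        MeasureTheory.volume 0 T := by exact hint1.neg
    simp only [hG]
    rw [intervalIntegral.integral_add hint1' hint2, intervalIntegral.integral_neg]
  rw [hsplit, hφT, hφ0, sub_zero] at hFTC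
  have hgoal : (fderiv ℝ M (x T)).comp (y T) + ∫ t in (0:ℝ)..T, (DL t).comp (y t)
      = ∫ t in (0:ℝ)..T, (innerSL ℝ (α t)).comp (B t) := by
    rw [← hFTC]; abel
  simpa [hDL, hB] using hgoal
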